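/- arXiv:1402.6250 — 4 statements merged into one kernel-verified Lean document; each statement's English description precedes it below -/
import Mathlib

section
/- Let C be a crystal framework in ℝ^d, let ω ∈ 𝕋^d and let b : V₀ → ℂ^d. Then the ω-phase-periodic velocity field u = b ⊗ e_ω (i.e. u(v,k) = ω^k b(v)) is an infinitesimal flex of C if and only if Φ_C(ω̄) b = 0, where ω̄ is the coordinatewise complex conjugate of ω and b is regarded as a vector in ℂ^{d|V₀|} via the column indexing of Φ_C. -/
open Filter

noncomputable section

/-- The multi-power `z^k = z₁^{k₁} ⋯ z_d^{k_d}` for `z ∈ ℂ^d`, `k ∈ ℤ^d`. -/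
def zpowVec {d : ℕ} (z : Fin d → ℂ) (k : Fin d → ℤ) : ℂ := ∏ j, z j ^ (k j)

/-- Membership in the `d`-torus `𝕋^d`. -/
def OnTorus {d : ℕ} (z : Fin d → ℂ) : Prop := ∀ j, ‖z j‖ = 1

/-- A crystal framework in `ℝ^d`: a finite motif of vertices `V` placed by `p`,
a full-rank translation lattice generated by `a₁, …, a_d`, and a finite set of
motif edges `E` with endpoints `fst e = (v, l)` and `snd e = (w, m)` standing for
the joints `p(v, l)` and `p(w, m)`.  Joints are pairwise distinct and edge vectors
are nonzero. -/
structure CrystalFramework (d : ℕ) where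
  V : Type
  fintypeV : Fintype V
  decV : DecidableEq V
  E : Type
  fintypeE : Fintype E
  p : V → Fin d → ℝ
  a : Fin d → Fin d → ℝ
  indep : LinearIndependent ℝ a
  fst : E → V × (Fin d → ℤ)
  snd : E → V × (Fin d → ℤ)
  joint_injective : Function.Injective
    (fun vk : V × (Fin d → ℤ) =>
      (fun i => p vk.1 i + ∑ j, (vk.2 j : ℝ) * a j i : Fin d → ℝ))
  edge_nonzero : ∀ e : E,
    (fun i => p (fst e).1 i + ∑ j, ((fst e).2 j : ℝ) * a j i : Fin d → ℝ) ≠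
    (fun i => p (snd e).1 i + ∑ j, ((snd e).2 j : ℝ) * a j i)

attribute [instance] CrystalFramework.fintypeV CrystalFramework.decV CrystalFramework.fintypeE

namespace CrystalFramework

variable {d : ℕ} (C : CrystalFramework d)

/-- The joint `p(v, k) = p(v) + k₁a₁ + ⋯ + k_d a_d`. -/
def joint (v : C.V) (k : Fin d → ℤ) : Fin d → ℝ :=
  fun i => C.p v i + ∑ j, (k j : ℝ) * C.a j i

/-- The edge vector `p(e) = p(v, l) - p(w, m)` for the motif edge `e = ((v,l),(w,m))`. -/
def edgeVec (e : C.E) : Fin d → ℝ :=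
  fun i => C.joint (C.fst e).1 (C.fst e).2 i - C.joint (C.snd e).1 (C.snd e).2 i

/-- A complex velocity field `u` is an infinitesimal flex:
`p(e) ⋅ (u(v, l+k) - u(w, m+k)) = 0` for every motif edge and every `k ∈ ℤ^d`. -/
def IsFlex (u : C.V × (Fin d → ℤ) → Fin d → ℂ) : Prop :=
  ∀ (e : C.E) (k : Fin d → ℤ),
    ∑ i, (C.edgeVec e i : ℂ) *
      (u ((C.fst e).1, fun j => (C.fst e).2 j + k j) i -
       u ((C.snd e).1, fun j => (C.snd e).2 j + k j) i) = 0

/-- A real velocity field `u` is an infinitesimal flex. -/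
def IsRealFlex (u : C.V × (Fin d → ℤ) → Fin d → ℝ) : Prop :=
  ∀ (e : C.E) (k : Fin d → ℤ),
    ∑ i, C.edgeVec e i *
      (u ((C.fst e).1, fun j => (C.fst e).2 j + k j) i -
       u ((C.snd e).1, fun j => (C.snd e).2 j + k j) i) = 0

/-- A complex velocity field is trivial if the flex condition holds for every pair of joints. -/
def IsTrivial (u : C.V × (Fin d → ℤ) → Fin d → ℂ) : Prop :=
  ∀ (v w : C.V) (k k' : Fin d → ℤ),
    ∑ i, ((C.joint v k i - C.joint w k' i : ℝ) : ℂ) * (u (v, k) i - u (w, k') i) = 0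

/-- A real velocity field is trivial if the flex condition holds for every pair of joints. -/
def IsRealTrivial (u : C.V × (Fin d → ℤ) → Fin d → ℝ) : Prop :=
  ∀ (v w : C.V) (k k' : Fin d → ℤ),
    ∑ i, (C.joint v k i - C.joint w k' i) * (u (v, k) i - u (w, k') i) = 0

/-- A complex velocity field is strictly periodic if `u(v,k) = u(v,0)`. -/
def StrictlyPeriodic (u : C.V × (Fin d → ℤ) → Fin d → ℂ) : Prop :=
  ∀ (v : C.V) (k : Fin d → ℤ), u (v, k) = u (v, 0)

/-- A real velocity field is strictly periodic if `u(v,k) = u(v,0)`. -/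
def StrictlyPeriodicReal (u : C.V × (Fin d → ℤ) → Fin d → ℝ) : Prop :=
  ∀ (v : C.V) (k : Fin d → ℤ), u (v, k) = u (v, 0)

/-- The `ω`-phase-periodic velocity field `b ⊗ e_ω : (v,k) ↦ ω^k b(v)`. -/
def phaseField (ω : Fin d → ℂ) (b : C.V → Fin d → ℂ) :
    C.V × (Fin d → ℤ) → Fin d → ℂ :=
  fun vk i => zpowVec ω vk.2 * b vk.1 i

/-- The symbol function `Φ_C(z)`: the row of the motif edge `e = ((v,l),(w,m))` has
entries `z̄^l p(e)` in the columns of `v` and `-z̄^m p(e)` in the columns of `w`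
(in particular entries `(z̄^l - z̄^m) p(e)` in the columns of `v` when `v = w`). -/
def symbol (z : Fin d → ℂ) : Matrix C.E (C.V × Fin d) ℂ :=
  Matrix.of fun e xi =>
    (C.edgeVec e xi.2 : ℂ) *
      ((if xi.1 = (C.fst e).1 then
          zpowVec (fun j => (starRingEnd ℂ) (z j)) (C.fst e).2 else 0) -
       (if xi.1 = (C.snd e).1 then
          zpowVec (fun j => (starRingEnd ℂ) (z j)) (C.snd e).2 else 0))

/-- The RUM spectrum `Ω(C)`: the set of `ω ∈ 𝕋^d` admitting a nonzero
`ω`-phase-periodic infinitesimal flex. -/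
def RUM : Set (Fin d → ℂ) :=
  {ω | OnTorus ω ∧ ∃ b : C.V → Fin d → ℂ, b ≠ 0 ∧ C.IsFlex (C.phaseField ω b)}

end CrystalFramework

/-! Phase-periodicity makes the flex condition of a motif edge at the translate `k` equal to
`ω^k` times the condition at `k = 0`, and `ω^k ≠ 0` on the torus. The condition at `k = 0` is
the row of `Φ_C(ω̄)` applied to `b`, because conjugating `ω̄` gives back `ω`. -/

lemma OnTorus.ne_zero {d : ℕ} {z : Fin d → ℂ} (hz : OnTorus z) (j : Fin d) : z j ≠ 0 :=
  norm_ne_zero_iff.mp (by rw [hz j]; exact one_ne_zero)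

section zpowVec

variable {d : ℕ} {z : Fin d → ℂ}

lemma zpowVec_ne_zero (hz : ∀ j, z j ≠ 0) (k : Fin d → ℤ) : zpowVec z k ≠ 0 :=
  Finset.prod_ne_zero_iff.mpr fun j _ => zpow_ne_zero _ (hz j)

lemma zpowVec_add (hz : ∀ j, z j ≠ 0) (l k : Fin d → ℤ) :
    zpowVec z (l + k) = zpowVec z l * zpowVec z k := by
  simp only [zpowVec, Pi.add_apply, zpow_add₀ (hz _), Finset.prod_mul_distrib]

end zpowVec

namespace CrystalFramework

variable {d : ℕ} (C : CrystalFramework d)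

lemma symbol_mulVec_apply (z : Fin d → ℂ) (x : C.V × Fin d → ℂ) (e : C.E) :
    (C.symbol z).mulVec x e =
      ∑ i, (C.edgeVec e i : ℂ) *
        (zpowVec (fun j => starRingEnd ℂ (z j)) (C.fst e).2 * x ((C.fst e).1, i) -
          zpowVec (fun j => starRingEnd ℂ (z j)) (C.snd e).2 * x ((C.snd e).1, i)) := by
  simp only [Matrix.mulVec, dotProduct, symbol, Matrix.of_apply, Fintype.sum_prod_type]
  rw [Finset.sum_comm]
  refine Finset.sum_congr rfl fun i _ => ?_
  simp only [sub_mul, ite_mul, zero_mul, mul_assoc, ← Finset.mul_sum, mul_sub,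
    Finset.sum_sub_distrib, Finset.sum_ite_eq', Finset.mem_univ, if_true]

lemma edgeVec_dot_phaseField_translate {ω : Fin d → ℂ} (hω : ∀ j, ω j ≠ 0)
    (b : C.V → Fin d → ℂ) (e : C.E) (k : Fin d → ℤ) :
    ∑ i, (C.edgeVec e i : ℂ) *
        (C.phaseField ω b ((C.fst e).1, fun j => (C.fst e).2 j + k j) i -
          C.phaseField ω b ((C.snd e).1, fun j => (C.snd e).2 j + k j) i) =
      zpowVec ω k *
        (C.symbol fun j => starRingEnd ℂ (ω j)).mulVec (fun xi => b xi.1 xi.2) e := by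
  simp only [symbol_mulVec_apply, Complex.conj_conj, phaseField, ← Pi.add_def,
    zpowVec_add hω, Finset.mul_sum]
  exact Finset.sum_congr rfl fun i _ => by ring

end CrystalFramework

/-- The `ω`-phase-periodic velocity field `u = b ⊗ e_ω` is an
infinitesimal flex of the crystal framework `C` if and only if `Φ_C(ω̄) b = 0`. -/
theorem phasePeriodic_isFlex_iff_symbol_mulVec_eq_zero
    {d : ℕ} (C : CrystalFramework d) (ω : Fin d → ℂ) (hω : OnTorus ω)
    (b : C.V → Fin d → ℂ) :
    C.IsFlex (C.phaseField ω b) ↔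
      (C.symbol fun j => (starRingEnd ℂ) (ω j)).mulVec (fun xi => b xi.1 xi.2) = 0 := by
  simp only [CrystalFramework.IsFlex, C.edgeVec_dot_phaseField_translate hω.ne_zero,
    mul_eq_zero, zpowVec_ne_zero hω.ne_zero, false_or, forall_const, funext_iff,
    Pi.zero_apply]
end
end

section
/- Let C be a crystal framework in ℝ^d. The following are equivalent: (i) every strictly periodic real infinitesimal flex of C (a flex u : V₀ × ℤ^d → ℝ^d with u(v,k) = u(v,0) for all v,k) is trivial; (ii) every strictly periodic complex infinitesimal flex of C is trivial; (iii) the rank of the matrix Φ_C(1,…,1) equals d|V₀| − d. -/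
open Filter

noncomputable section

/-!
A strictly periodic velocity field is determined by its motif velocities `x : V₀ × Fin d → 𝕜`.
It is a flex iff `x` lies in the kernel of the real periodic rigidity matrix `R`, whose
complexification is `Φ_C(1)`. It is trivial iff `x(v) = x(w)` for all motif vertices: comparing
the joints `p(v, e_j)` and `p(v, 0)` shows that `x(v) - x(w)` is orthogonal to each lattice
vector `a_j`, and these form a basis. Vertex-constant vectors always lie in `ker R` and form a
`d`-dimensional space (when `V₀ ≠ ∅`), so by rank–nullity rigidity means `rank R = d|V₀| - d`.
The real and complex conditions agree because `R` is real: take real and imaginary parts.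
-/

open Matrix Module

theorem LinearIndependent.eq_zero_of_forall_sum_algebraMap_mul_eq_zero {F K n : Type*}
    [Field F] [Field K] [Algebra F K] [Fintype n] [DecidableEq n] {a : n → n → F}
    (ha : LinearIndependent F a) {x : n → K}
    (hx : ∀ j, ∑ i, algebraMap F K (a j i) * x i = 0) : x = 0 := by
  have hunit : IsUnit ((Matrix.of a).map (algebraMap F K)) :=
    (linearIndependent_rows_iff_isUnit.mp ha).map (algebraMap F K).mapMatrix
  refine mulVec_injective_iff_isUnit.mpr hunit ?_
  ext j
  simpa [mulVec, dotProduct] using hx j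

theorem LinearMap.ker_le_iff_finrank_range_eq {K M N : Type*} [Field K] [AddCommGroup M]
    [Module K M] [FiniteDimensional K M] [AddCommGroup N] [Module K N] (f : M →ₗ[K] N)
    {W : Submodule K M} (hW : W ≤ LinearMap.ker f) :
    LinearMap.ker f ≤ W ↔ finrank K (LinearMap.range f) = finrank K M - finrank K W := by
  have hrank := f.finrank_range_add_finrank_ker
  have hmono := Submodule.finrank_mono hW
  constructor
  · intro hker
    rw [le_antisymm hker hW] at hrank
    omega
  · intro hf
    exact (Submodule.eq_of_le_of_finrank_eq hW (by omega)).ge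

theorem LinearMap.mem_range_funLeft_snd_iff {K α β : Type*} [Semiring K] (x : α × β → K) :
    x ∈ LinearMap.range (LinearMap.funLeft K K (Prod.snd : α × β → β)) ↔
      ∀ a a' b, x (a, b) = x (a', b) := by
  constructor
  · rintro ⟨c, rfl⟩ a a' b
    rfl
  · intro hx
    rcases isEmpty_or_nonempty α with hα | ⟨⟨a₀⟩⟩
    · exact ⟨0, Subsingleton.elim _ _⟩
    · exact ⟨fun b => x (a₀, b), funext fun ab => hx a₀ ab.1 ab.2⟩

theorem Matrix.re_map_ofReal_mulVec {m n : Type*} [Fintype n] (R : Matrix m n ℝ) (x : n → ℂ)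
    (i : m) : ((R.map (↑) *ᵥ x) i).re = (R *ᵥ fun j => (x j).re) i := by
  simp [mulVec, dotProduct, Complex.re_sum]

theorem Matrix.im_map_ofReal_mulVec {m n : Type*} [Fintype n] (R : Matrix m n ℝ) (x : n → ℂ)
    (i : m) : ((R.map (↑) *ᵥ x) i).im = (R *ᵥ fun j => (x j).im) i := by
  simp [mulVec, dotProduct, Complex.im_sum]

namespace CrystalFramework

variable {d : ℕ} (C : CrystalFramework d)

def periodicRigidityMatrix : Matrix C.E (C.V × Fin d) ℝ :=
  Matrix.of fun e x =>
    C.edgeVec e x.2 *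
      ((if x.1 = (C.fst e).1 then 1 else 0) - (if x.1 = (C.snd e).1 then 1 else 0))

theorem symbol_one : C.symbol (fun _ => 1) = C.periodicRigidityMatrix.map (algebraMap ℝ ℂ) := by
  ext e x
  simp [symbol, periodicRigidityMatrix, zpowVec, apply_ite Complex.ofReal]

section Scalars

variable {𝕜 : Type*}

def periodicField (x : C.V × Fin d → 𝕜) : C.V × (Fin d → ℤ) → Fin d → 𝕜 :=
  fun vk i => x (vk.1, i)

theorem eq_periodicField {u : C.V × (Fin d → ℤ) → Fin d → 𝕜}
    (hu : ∀ v k, u (v, k) = u (v, 0)) : u = C.periodicField fun x => u (x.1, 0) x.2 := by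
  funext vk i
  rw [periodicField, ← hu]

variable (𝕜) [Field 𝕜] [Algebra ℝ 𝕜]

def IsFlexOver (u : C.V × (Fin d → ℤ) → Fin d → 𝕜) : Prop :=
  ∀ (e : C.E) (k : Fin d → ℤ),
    ∑ i, algebraMap ℝ 𝕜 (C.edgeVec e i) *
      (u ((C.fst e).1, fun j => (C.fst e).2 j + k j) i -
       u ((C.snd e).1, fun j => (C.snd e).2 j + k j) i) = 0

def IsTrivialOver (u : C.V × (Fin d → ℤ) → Fin d → 𝕜) : Prop :=
  ∀ (v w : C.V) (k k' : Fin d → ℤ),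
    ∑ i, algebraMap ℝ 𝕜 (C.joint v k i - C.joint w k' i) * (u (v, k) i - u (w, k') i) = 0

def IsPeriodicallyRigidOver : Prop :=
  ∀ x : C.V × Fin d → 𝕜, C.periodicRigidityMatrix.map (algebraMap ℝ 𝕜) *ᵥ x = 0 →
    ∀ v w i, x (v, i) = x (w, i)

variable {𝕜}

theorem periodicRigidityMatrix_map_mulVec (x : C.V × Fin d → 𝕜) (e : C.E) :
    (C.periodicRigidityMatrix.map (algebraMap ℝ 𝕜) *ᵥ x) e =
      ∑ i, algebraMap ℝ 𝕜 (C.edgeVec e i) * (x ((C.fst e).1, i) - x ((C.snd e).1, i)) := by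
  simp [mulVec, dotProduct, periodicRigidityMatrix, Fintype.sum_prod_type_right, mul_sub, sub_mul,
    Finset.sum_sub_distrib, apply_ite (algebraMap ℝ 𝕜)]

theorem isFlexOver_periodicField_iff (x : C.V × Fin d → 𝕜) :
    C.IsFlexOver 𝕜 (C.periodicField x) ↔
      C.periodicRigidityMatrix.map (algebraMap ℝ 𝕜) *ᵥ x = 0 := by
  simp only [IsFlexOver, periodicField, funext_iff, periodicRigidityMatrix_map_mulVec,
    Pi.zero_apply]
  exact ⟨fun h e => h e 0, fun h e _ => h e⟩

theorem joint_single_one_sub_joint_zero (v : C.V) (j i : Fin d) :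
    C.joint v (Pi.single j 1) i - C.joint v 0 i = C.a j i := by
  simp [joint, Pi.single_apply, apply_ite (fun z : ℤ => (z : ℝ))]

theorem isTrivialOver_periodicField_iff (x : C.V × Fin d → 𝕜) :
    C.IsTrivialOver 𝕜 (C.periodicField x) ↔ ∀ v w i, x (v, i) = x (w, i) := by
  constructor
  · intro h v w
    -- Translating `v` by `a_j` shows that `x v - x w` is orthogonal to every `a_j`.
    have horth : ∀ j, ∑ i, algebraMap ℝ 𝕜 (C.a j i) * (x (v, i) - x (w, i)) = 0 := fun j =>
      calc ∑ i, algebraMap ℝ 𝕜 (C.a j i) * (x (v, i) - x (w, i))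
          = ∑ i, algebraMap ℝ 𝕜 (C.joint v (Pi.single j 1) i - C.joint w 0 i) *
                (x (v, i) - x (w, i)) -
              ∑ i, algebraMap ℝ 𝕜 (C.joint v 0 i - C.joint w 0 i) * (x (v, i) - x (w, i)) := by
            rw [← Finset.sum_sub_distrib]
            refine Finset.sum_congr rfl fun i _ => ?_
            rw [← sub_mul, ← map_sub, sub_sub_sub_cancel_right,
              C.joint_single_one_sub_joint_zero]
        _ = 0 - 0 := congrArg₂ _ (h v w (Pi.single j 1) 0) (h v w 0 0)
        _ = 0 := sub_zero 0
    intro i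
    exact sub_eq_zero.mp (congrFun (C.indep.eq_zero_of_forall_sum_algebraMap_mul_eq_zero horth) i)
  · intro h v w k k'
    simp [periodicField, h v w]

theorem forall_periodic_flex_isTrivialOver_iff :
    (∀ u : C.V × (Fin d → ℤ) → Fin d → 𝕜,
        C.IsFlexOver 𝕜 u → (∀ v k, u (v, k) = u (v, 0)) → C.IsTrivialOver 𝕜 u) ↔
      C.IsPeriodicallyRigidOver 𝕜 := by
  constructor
  · intro h x hx
    rw [← isTrivialOver_periodicField_iff]
    exact h _ ((C.isFlexOver_periodicField_iff x).mpr hx) fun _ _ => rfl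
  · intro h u hflex hu
    rw [C.eq_periodicField hu] at hflex ⊢
    exact (C.isTrivialOver_periodicField_iff _).mpr
      (h _ ((C.isFlexOver_periodicField_iff _).mp hflex))

theorem isPeriodicallyRigidOver_iff_rank :
    C.IsPeriodicallyRigidOver 𝕜 ↔
      (C.periodicRigidityMatrix.map (algebraMap ℝ 𝕜)).rank = d * Fintype.card C.V - d := by
  set f := (C.periodicRigidityMatrix.map (algebraMap ℝ 𝕜)).mulVecLin
  set W := LinearMap.range (LinearMap.funLeft 𝕜 𝕜 (Prod.snd : C.V × Fin d → Fin d))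
  have hW : W ≤ LinearMap.ker f := by
    rintro _ ⟨c, rfl⟩
    ext e
    simp [f, periodicRigidityMatrix_map_mulVec, LinearMap.funLeft]
  have hrigid : C.IsPeriodicallyRigidOver 𝕜 ↔ LinearMap.ker f ≤ W := by
    simp only [IsPeriodicallyRigidOver, SetLike.le_def, LinearMap.mem_ker, f,
      mulVecLin_apply, W, LinearMap.mem_range_funLeft_snd_iff]
  have hdim : finrank 𝕜 (C.V × Fin d → 𝕜) - finrank 𝕜 W = d * Fintype.card C.V - d := by
    rcases isEmpty_or_nonempty C.V with hV | ⟨⟨v₀⟩⟩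
    · simp
    · rw [LinearMap.finrank_range_of_inj (LinearMap.funLeft_injective_of_surjective _ _ _
        fun i => ⟨(v₀, i), rfl⟩)]
      simp [Nat.mul_comm]
  rw [hrigid, LinearMap.ker_le_iff_finrank_range_eq f hW, hdim, rank]

end Scalars

theorem isPeriodicallyRigidOver_real_iff_complex :
    C.IsPeriodicallyRigidOver ℝ ↔ C.IsPeriodicallyRigidOver ℂ := by
  simp only [IsPeriodicallyRigidOver, Algebra.algebraMap_self, RingHom.coe_id, Matrix.map_id,
    Complex.coe_algebraMap]
  constructor
  · intro h x hx v w i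
    have hre := h (fun j => (x j).re) (by ext e; rw [← re_map_ofReal_mulVec, hx]; rfl) v w i
    have him := h (fun j => (x j).im) (by ext e; rw [← im_map_ofReal_mulVec, hx]; rfl) v w i
    exact Complex.ext hre him
  · intro h x hx v w i
    have hxℂ : C.periodicRigidityMatrix.map (↑) *ᵥ ((↑) ∘ x : _ → ℂ) = 0 := by
      ext e
      have := RingHom.map_mulVec Complex.ofRealHom C.periodicRigidityMatrix x e
      simp only [hx, Pi.zero_apply, map_zero] at this
      exact this.symm
    exact Complex.ofReal_injective (h _ hxℂ v w i)

end CrystalFramework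

/-- For a crystal framework `C` in `ℝ^d` the following are equivalent:
(i) every strictly periodic real infinitesimal flex is trivial;
(ii) every strictly periodic complex infinitesimal flex is trivial;
(iii) `rank Φ_C(1,…,1) = d|V₀| - d`. -/
theorem strictlyPeriodic_rigidity_tfae {d : ℕ} (C : CrystalFramework d) :
    ((∀ u : C.V × (Fin d → ℤ) → Fin d → ℝ,
        C.IsRealFlex u → C.StrictlyPeriodicReal u → C.IsRealTrivial u) ↔
      (∀ u : C.V × (Fin d → ℤ) → Fin d → ℂ,
        C.IsFlex u → C.StrictlyPeriodic u → C.IsTrivial u)) ∧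
    ((∀ u : C.V × (Fin d → ℤ) → Fin d → ℂ,
        C.IsFlex u → C.StrictlyPeriodic u → C.IsTrivial u) ↔
      (C.symbol fun _ => 1).rank = d * Fintype.card C.V - d) := by
  -- Over `ℝ` and `ℂ`, `IsFlexOver` and `IsTrivialOver` unfold to the notions of the statement.
  have hreal := C.forall_periodic_flex_isTrivialOver_iff (𝕜 := ℝ)
  have hcomplex := C.forall_periodic_flex_isTrivialOver_iff (𝕜 := ℂ)
  refine ⟨hreal.trans (C.isPeriodicallyRigidOver_real_iff_complex.trans hcomplex.symm),
    hcomplex.trans ?_⟩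
  rw [C.symbol_one]
  exact C.isPeriodicallyRigidOver_iff_rank
end
end

section
/- (Parseval inequality) Let h : ℤ^d → ℂ^r be almost periodic and let ω₁,…,ω_n be distinct points of 𝕋^d. Then Σ_{i=1}^n ‖[h, e_{ω_i}]‖² ≤ [h,h], where [h, e_{ω_i}] ∈ ℂ^r is the mean pairing of h against the scalar sequence e_{ω_i} and [h,h] = lim_{N→∞} (2N+1)^{−d} Σ_{|k_j| ≤ N} ‖h(k)‖². -/
open Filter

noncomputable section

/-- The box `{k ∈ ℤ^d : |k_j| ≤ N for all j}`. -/
def box (d : ℕ) (N : ℕ) : Finset (Fin d → ℤ) :=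
  Fintype.piFinset fun _ => Finset.Icc (-(N : ℤ)) (N : ℤ)

/-- The average `(2N+1)^{-d} ∑_{|k_j| ≤ N} f(k)`. -/
def boxAvg {d : ℕ} (f : (Fin d → ℤ) → ℂ) (N : ℕ) : ℂ :=
  (((2 * N + 1 : ℕ) : ℂ) ^ d)⁻¹ * ∑ k ∈ box d N, f k

/-- `f : ℤ^d → ℂ` has mean value `L`. -/
def HasMean {d : ℕ} (f : (Fin d → ℤ) → ℂ) (L : ℂ) : Prop :=
  Tendsto (boxAvg f) atTop (nhds L)

/-- The mean pairing `[h, g] = lim_N (2N+1)^{-d} ∑_{|k_j| ≤ N} h(k) ⬝ conj (g(k))`,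
computed componentwise, has value `L`. -/
def HasMeanPairing {d : ℕ} {ι : Type} [Fintype ι]
    (h : (Fin d → ℤ) → ι → ℂ) (g : (Fin d → ℤ) → ℂ) (L : ι → ℂ) : Prop :=
  ∀ i, HasMean (fun k => h k i * (starRingEnd ℂ) (g k)) (L i)

/-- The pure frequency sequence `e_ω(k) = ω^k`. -/
def eOmega {d : ℕ} (ω : Fin d → ℂ) : (Fin d → ℤ) → ℂ := fun k => zpowVec ω k

/-- Bohr almost periodicity for a bounded `h : ℤ^d → ℂ^ι`: for every `ε > 0`
there is `R > 0` such that every closed Euclidean ball of radius `R` in `ℝ^d`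
contains an `ε`-translation vector `l` of `h`, i.e. `‖R_l h - h‖_∞ < ε`. -/
def IsBohrAP {d : ℕ} {ι : Type} [Fintype ι] (h : (Fin d → ℤ) → ι → ℂ) : Prop :=
  (∃ M : ℝ, ∀ k i, ‖h k i‖ ≤ M) ∧
  ∀ ε > (0 : ℝ), ∃ R > (0 : ℝ), ∀ c : Fin d → ℝ, ∃ l : Fin d → ℤ,
    Real.sqrt (∑ j, ((l j : ℝ) - c j) ^ 2) ≤ R ∧
    ∀ k i, ‖h (fun j => k j - l j) i - h k i‖ < ε

/-!
Bessel's inequality for the mean inner product. The characters `e_ω`, `ω ∈ 𝕋^d`, are orthonormal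
for the mean: the box average of `ω^k` factors into one-dimensional averages of `ω_j^m` over
`-N ≤ m ≤ N`, and such a geometric sum stays bounded unless `ω_j = 1`. Hence, for
`b = ∑ i [h, e_{ω_i}] e_{ω_i}`, the mean of `‖h - b‖²` is `[h, h] - ∑ i ‖[h, e_{ω_i}]‖²`,
which is nonnegative.
-/

open ComplexConjugate

namespace HasMean

variable {d : ℕ} {f g : (Fin d → ℤ) → ℂ} {a b : ℂ}

theorem add (hf : HasMean f a) (hg : HasMean g b) : HasMean (fun k => f k + g k) (a + b) :=
  (Tendsto.add hf hg).congr fun N => by simp only [boxAvg, Finset.sum_add_distrib, mul_add]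

theorem sub (hf : HasMean f a) (hg : HasMean g b) : HasMean (fun k => f k - g k) (a - b) :=
  (Tendsto.sub hf hg).congr fun N => by simp only [boxAvg, Finset.sum_sub_distrib, mul_sub]

theorem const_mul (c : ℂ) (hf : HasMean f a) : HasMean (fun k => c * f k) (c * a) :=
  (Tendsto.const_mul c hf).congr fun N => by simp only [boxAvg, ← Finset.mul_sum]; ring

theorem map_conj (hf : HasMean f a) : HasMean (fun k => conj (f k)) (conj a) :=
  ((Complex.continuous_conj.tendsto a).comp hf).congr fun N => by
    simp only [Function.comp_apply, boxAvg, map_mul, map_sum, map_inv₀, map_pow, map_natCast]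

theorem sum {κ : Type*} (s : Finset κ) {F : κ → (Fin d → ℤ) → ℂ} {A : κ → ℂ}
    (hF : ∀ i ∈ s, HasMean (F i) (A i)) : HasMean (fun k => ∑ i ∈ s, F i k) (∑ i ∈ s, A i) :=
  (tendsto_finsetSum s hF).congr fun N => by
    simp only [boxAvg, Finset.mul_sum]; exact Finset.sum_comm

theorem re_nonneg (hf : HasMean f a) (hpos : ∀ k, 0 ≤ (f k).re) : 0 ≤ a.re := by
  refine ge_of_tendsto' ((Complex.continuous_re.tendsto a).comp hf) fun N => ?_
  have hcoe : (((2 * N + 1 : ℕ) : ℂ) ^ d)⁻¹ = (((2 * N + 1 : ℕ) : ℝ) ^ d)⁻¹ := by push_cast; rfl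
  simp only [Function.comp_apply, boxAvg, hcoe, Complex.re_ofReal_mul, Complex.re_sum]
  exact mul_nonneg (by positivity) (Finset.sum_nonneg fun k _ => hpos k)

end HasMean

theorem sub_one_mul_sum_zpow_Icc {K : Type*} [Field K] {z : K} (hz : z ≠ 0) (N : ℕ) :
    (z - 1) * ∑ m ∈ Finset.Icc (-(N : ℤ)) N, z ^ m = z ^ ((N : ℤ) + 1) - z ^ (-(N : ℤ)) := by
  have htelescope := Finset.sum_Ico_int_sub N fun m => z ^ m
  rw [Finset.sum_Icc_eq_sum_Ico_add _ (by omega), mul_add, Finset.mul_sum]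
  simp only [sub_mul, one_mul, mul_comm z, ← zpow_add_one₀ hz, Finset.sum_sub_distrib]
    at htelescope ⊢
  linear_combination -htelescope

theorem norm_sum_zpow_Icc_le {K : Type*} [NormedField K] {z : K} (hz : ‖z‖ = 1)
    (hz1 : z ≠ 1) (N : ℕ) : ‖∑ m ∈ Finset.Icc (-(N : ℤ)) N, z ^ m‖ ≤ 2 / ‖z - 1‖ := by
  have hz0 : z ≠ 0 := by rintro rfl; simp at hz
  rw [le_div_iff₀' (norm_pos_iff.mpr (sub_ne_zero.mpr hz1)), ← norm_mul,
    sub_one_mul_sum_zpow_Icc hz0]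
  calc _ ≤ ‖z ^ ((N : ℤ) + 1)‖ + ‖z ^ (-(N : ℤ))‖ := norm_sub_le _ _
    _ = 2 := by simp only [norm_zpow, hz, one_zpow]; norm_num

def symmAvg (f : ℤ → ℂ) (N : ℕ) : ℂ :=
  ((2 * N + 1 : ℕ) : ℂ)⁻¹ * ∑ m ∈ Finset.Icc (-(N : ℤ)) N, f m

theorem boxAvg_prod {d : ℕ} (f : Fin d → ℤ → ℂ) (N : ℕ) :
    boxAvg (fun k => ∏ j, f j (k j)) N = ∏ j, symmAvg (f j) N := by
  simp only [boxAvg, box, symmAvg, Finset.prod_mul_distrib, Finset.prod_univ_sum,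
    Finset.prod_const, Finset.card_univ, Fintype.card_fin, inv_pow]

theorem tendsto_inv_two_mul_add_one :
    Tendsto (fun N : ℕ => ((2 * N + 1 : ℕ) : ℝ)⁻¹) atTop (nhds 0) :=
  tendsto_inv_atTop_zero.comp <| tendsto_natCast_atTop_atTop.comp <|
    tendsto_atTop_mono (fun N => by simp only [id]; omega) tendsto_id

theorem tendsto_symmAvg_zpow {z : ℂ} (hz : ‖z‖ = 1) :
    Tendsto (symmAvg (z ^ ·)) atTop (nhds (if z = 1 then 1 else 0)) := by
  split_ifs with hz1
  · refine tendsto_const_nhds.congr fun N => ?_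
    have hcard : (Finset.Icc (-(N : ℤ)) N).card = 2 * N + 1 := by rw [Int.card_Icc]; omega
    have hpos : ((2 * N + 1 : ℕ) : ℂ) ≠ 0 := Nat.cast_ne_zero.mpr (by omega)
    simp only [symmAvg, hz1, one_zpow, Finset.sum_const, hcard, nsmul_one, inv_mul_cancel₀ hpos]
  · refine squeeze_zero_norm (a := fun N : ℕ => ((2 * N + 1 : ℕ) : ℝ)⁻¹ * (2 / ‖z - 1‖))
      (fun N => ?_) (by simpa only [zero_mul] using tendsto_inv_two_mul_add_one.mul_const _)
    rw [symmAvg, norm_mul, norm_inv, Complex.norm_natCast]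
    gcongr
    exact norm_sum_zpow_Icc_le hz hz1 N

theorem OnTorus.mul_conj {d : ℕ} {ω ω' : Fin d → ℂ} (hω : OnTorus ω) (hω' : OnTorus ω') :
    OnTorus fun j => ω j * conj (ω' j) := fun j => by
  rw [norm_mul, Complex.norm_conj, hω j, hω' j, mul_one]

theorem OnTorus.mul_conj_eq_one_iff {d : ℕ} {ω ω' : Fin d → ℂ} (hω' : OnTorus ω') :
    (fun j => ω j * conj (ω' j)) = 1 ↔ ω = ω' := by
  have hinv (j : Fin d) : ω j * conj (ω' j) = 1 ↔ ω j = ω' j := by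
    rw [← Complex.inv_eq_conj (hω' j), mul_inv_eq_one₀ (norm_ne_zero_iff.mp (by simp [hω' j]))]
  simp only [funext_iff, Pi.one_apply, hinv]

theorem hasMean_zpowVec {d : ℕ} {z : Fin d → ℂ} (hz : OnTorus z) :
    HasMean (zpowVec z) (if z = 1 then 1 else 0) := by
  have hprod := tendsto_finsetProd Finset.univ fun j _ => tendsto_symmAvg_zpow (hz j)
  rw [Fintype.prod_boole] at hprod
  simp only [← Pi.one_apply (M := fun _ : Fin d => ℂ), ← funext_iff] at hprod
  exact hprod.congr fun N => (boxAvg_prod _ N).symm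

theorem eOmega_mul_conj {d : ℕ} (ω ω' : Fin d → ℂ) (k : Fin d → ℤ) :
    eOmega ω k * conj (eOmega ω' k) = zpowVec (fun j => ω j * conj (ω' j)) k := by
  simp only [eOmega, zpowVec, map_prod, map_zpow₀, ← Finset.prod_mul_distrib, mul_zpow]

def MeanOrthonormal {d : ℕ} {κ : Type*} [DecidableEq κ] (e : κ → (Fin d → ℤ) → ℂ) : Prop :=
  ∀ i i', HasMean (fun k => e i k * conj (e i' k)) (if i = i' then 1 else 0)

theorem meanOrthonormal_eOmega {d : ℕ} {κ : Type*} [DecidableEq κ] {ω : κ → Fin d → ℂ}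
    (hω : ∀ i, OnTorus (ω i)) (hinj : Function.Injective ω) :
    MeanOrthonormal fun i => eOmega (ω i) := fun i i' => by
  simp only [eOmega_mul_conj, ← hinj.eq_iff, ← (hω i').mul_conj_eq_one_iff]
  exact hasMean_zpowVec ((hω i).mul_conj (hω i'))

section Bessel

variable {d : ℕ} {ι : Type} {κ : Type*} [Fintype ι] [Fintype κ]

theorem hasMean_sum_mul_conj_combination {f : (Fin d → ℤ) → ι → ℂ} {e : κ → (Fin d → ℤ) → ℂ}
    {L : κ → ι → ℂ} (hf : ∀ i, HasMeanPairing f (e i) (L i)) (c : κ → ι → ℂ) :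
    HasMean (fun k => ∑ j, f k j * conj (∑ i, c i j * e i k))
      (∑ i, ∑ j, L i j * conj (c i j)) := by
  have hmean := HasMean.sum Finset.univ fun j _ =>
    HasMean.sum Finset.univ fun i _ => (hf i j).const_mul (conj (c i j))
  convert hmean using 1
  · funext k
    simp only [map_sum, map_mul, Finset.mul_sum]
    exact Finset.sum_congr rfl fun j _ => Finset.sum_congr rfl fun i _ => by ring
  · rw [Finset.sum_comm]
    simp only [mul_comm]

theorem MeanOrthonormal.hasMeanPairing_combination [DecidableEq κ] {e : κ → (Fin d → ℤ) → ℂ}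
    (he : MeanOrthonormal e) (c : κ → ι → ℂ) (i : κ) :
    HasMeanPairing (fun k j => ∑ i', c i' j * e i' k) (e i) (c i) := fun j => by
  have hmean := HasMean.sum Finset.univ fun i' _ => (he i' i).const_mul (c i' j)
  simp only [mul_ite, mul_one, mul_zero, Finset.sum_ite_eq', Finset.mem_univ, if_true] at hmean
  convert hmean using 2 with k
  rw [Finset.sum_mul]
  exact Finset.sum_congr rfl fun i' _ => mul_assoc _ _ _

theorem HasMean.sum_mul_conj_sub {f g : (Fin d → ℤ) → ι → ℂ} {A B C : ℂ}
    (hff : HasMean (fun k => ∑ j, f k j * conj (f k j)) A)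
    (hfg : HasMean (fun k => ∑ j, f k j * conj (g k j)) B)
    (hgg : HasMean (fun k => ∑ j, g k j * conj (g k j)) C) :
    HasMean (fun k => ∑ j, (f k j - g k j) * conj (f k j - g k j)) (A - B - conj B + C) := by
  convert ((hff.sub hfg).sub hfg.map_conj).add hgg using 1
  funext k
  simp only [map_sum, map_mul, map_sub, Complex.conj_conj, ← Finset.sum_sub_distrib,
    ← Finset.sum_add_distrib]
  exact Finset.sum_congr rfl fun j _ => by ring

theorem bessel_inequality [DecidableEq κ] {e : κ → (Fin d → ℤ) → ℂ} (he : MeanOrthonormal e)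
    {h : (Fin d → ℤ) → ι → ℂ} {L : κ → ι → ℂ} (hL : ∀ i, HasMeanPairing h (e i) (L i)) {M : ℝ}
    (hM : HasMean (fun k => ∑ j, h k j * conj (h k j)) M) :
    ∑ i, ∑ j, ‖L i j‖ ^ 2 ≤ M := by
  have hS : ∑ i, ∑ j, L i j * conj (L i j) = ((∑ i, ∑ j, ‖L i j‖ ^ 2 : ℝ) : ℂ) := by
    push_cast; simp only [Complex.mul_conj']
  have hres := hM.sum_mul_conj_sub (hasMean_sum_mul_conj_combination hL L)
    (hasMean_sum_mul_conj_combination (he.hasMeanPairing_combination L) L)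
  have hnonneg := hres.re_nonneg fun k => by
    simp only [Complex.mul_conj', Complex.re_sum, ← Complex.ofReal_pow, Complex.ofReal_re]
    positivity
  rw [hS, Complex.conj_ofReal] at hnonneg
  simp only [Complex.add_re, Complex.sub_re, Complex.ofReal_re] at hnonneg
  linarith

end Bessel

theorem parseval_inequality_general {d r n : ℕ}
    (h : (Fin d → ℤ) → Fin r → ℂ)
    (ω : Fin n → Fin d → ℂ) (hω : ∀ i, OnTorus (ω i))
    (hdist : Function.Injective ω)
    (L : Fin n → Fin r → ℂ)
    (hL : ∀ i, HasMeanPairing h (eOmega (ω i)) (L i))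
    (M : ℝ)
    (hM : HasMean (fun k => ∑ i, h k i * (starRingEnd ℂ) (h k i)) (M : ℂ)) :
    ∑ i, ∑ j, ‖L i j‖ ^ 2 ≤ M :=
  bessel_inequality (meanOrthonormal_eOmega hω hdist) hL hM

/-- Parseval inequality. If `h : ℤ^d → ℂ^r` is almost periodic,
`ω₁, …, ω_n` are distinct points of `𝕋^d`, `L i = [h, e_{ω_i}]` and `M = [h, h]`,
then `∑ i ‖L i‖² ≤ M`. -/
theorem parseval_inequality {d r n : ℕ}
    (h : (Fin d → ℤ) → Fin r → ℂ) (hap : IsBohrAP h)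
    (ω : Fin n → Fin d → ℂ) (hω : ∀ i, OnTorus (ω i))
    (hdist : Function.Injective ω)
    (L : Fin n → Fin r → ℂ)
    (hL : ∀ i, HasMeanPairing h (eOmega (ω i)) (L i))
    (M : ℝ)
    (hM : HasMean (fun k => ∑ i, h k i * (starRingEnd ℂ) (h k i)) (M : ℂ)) :
    ∑ i, ∑ j, ‖L i j‖ ^ 2 ≤ M :=
  parseval_inequality_general h ω hω hdist L hL M hM
end
end

section
/- Let C be the triangulated crystal framework in ℝ² with one motif vertex v placed at the origin, lattice vectors a₁ = (1,0) and a₂ = (1/2, √3/2), and motif edges ((v,(0,0)),(v,(1,0))), ((v,(1,0)),(v,(0,1))) and ((v,(0,0)),(v,(0,1))); thus the joints are the points k₁a₁ + k₂a₂, k ∈ ℤ², and each joint is joined by bars to its six nearest neighbours. Then C is infinitesimally rigid: every real infinitesimal flex u : ℤ² → ℝ² of C is trivial. -/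
open Filter

noncomputable section

/-!
The three bar conditions on a lattice triangle `k, k + (1,0), k + (0,1)` force the velocities on it
to be those of an infinitesimal rotation `x ↦ ω(k) • rot90 x` plus a translation. Comparing the two
routes around each lattice parallelogram shows that `ω` is translation invariant, hence constant,
so `u` is a single infinitesimal rigid motion `x ↦ t + ω • rot90 x` of the plane, and such a
motion preserves all distances to first order.
-/

theorem AddSubgroup.apply_eq_apply_zero_of_mem_closure {G M : Type*} [AddGroup G] {S : Set G}
    {f : G → M} (hf : ∀ s ∈ S, ∀ g, f (s + g) = f g) {g : G} (hg : g ∈ AddSubgroup.closure S) :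
    f g = f 0 := by
  induction hg using AddSubgroup.closure_induction_left with
  | zero => rfl
  | add_left s hs g _ ih => rw [hf s hs, ih]
  | neg_add_cancel s hs g _ ih => rw [← ih, ← hf s hs, add_neg_cancel_left]

theorem mem_closure_unit_vectors (k : Fin 2 → ℤ) :
    k ∈ AddSubgroup.closure {![1, 0], ![0, 1]} := by
  have hk : k = k 0 • ![1, 0] + k 1 • ![0, 1] := by
    ext i; fin_cases i <;> simp
  rw [hk]
  exact add_mem (zsmul_mem (AddSubgroup.subset_closure (by simp)) _)
    (zsmul_mem (AddSubgroup.subset_closure (by simp)) _)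

theorem eq_apply_zero_of_translation_invariant {M : Type*} {f : (Fin 2 → ℤ) → M}
    (h₀ : ∀ k, f (![1, 0] + k) = f k) (h₁ : ∀ k, f (![0, 1] + k) = f k) (k : Fin 2 → ℤ) :
    f k = f 0 :=
  AddSubgroup.apply_eq_apply_zero_of_mem_closure
    (by rintro s (rfl | rfl) <;> assumption) (mem_closure_unit_vectors k)

def rot90 : (Fin 2 → ℝ) →ₗ[ℝ] Fin 2 → ℝ where
  toFun x := ![-x 1, x 0]
  map_add' x y := by ext i; fin_cases i <;> simp [add_comm]
  map_smul' c x := by ext i; fin_cases i <;> simp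

theorem rot90_apply (x : Fin 2 → ℝ) : rot90 x = ![-x 1, x 0] := rfl

@[simp]
theorem dotProduct_rot90_self (x : Fin 2 → ℝ) : x ⬝ᵥ rot90 x = 0 := by
  simp [rot90_apply, dotProduct, Fin.sum_univ_two]; ring

theorem dotProduct_rot90_comm (x y : Fin 2 → ℝ) : x ⬝ᵥ rot90 y = -(y ⬝ᵥ rot90 x) := by
  simp [rot90_apply, dotProduct, Fin.sum_univ_two]; ring

/-- Expansion of `x` in the basis `rot90 a`, `rot90 b`, scaled by the determinant. -/
theorem dotProduct_rot90_smul_eq_sub (a b x : Fin 2 → ℝ) :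
    (b ⬝ᵥ rot90 a) • x = (b ⬝ᵥ x) • rot90 a - (a ⬝ᵥ x) • rot90 b := by
  ext i; fin_cases i <;> simp [rot90_apply, dotProduct, Fin.sum_univ_two] <;> ring

/-- `b ⬝ᵥ rot90 a` is the determinant of the matrix with rows `a`, `b`. -/
theorem dotProduct_rot90_ne_zero {A : Matrix (Fin 2) (Fin 2) ℝ} (hA : LinearIndependent ℝ A) :
    A 1 ⬝ᵥ rot90 (A 0) ≠ 0 := by
  have hdet := (Matrix.isUnit_iff_isUnit_det A).mp (Matrix.linearIndependent_rows_iff_isUnit.mp hA)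
  rw [isUnit_iff_ne_zero, Matrix.det_fin_two] at hdet
  convert hdet using 1
  simp [rot90_apply, dotProduct, Fin.sum_univ_two]; ring

/-- `u` is an infinitesimal flex of the triangulated framework on the lattice `ℤa + ℤb`: each bar of
that framework is a side of exactly one triangle `k, k + (1,0), k + (0,1)`. -/
def IsTriangularLatticeFlex (a b : Fin 2 → ℝ) (u : (Fin 2 → ℤ) → Fin 2 → ℝ) : Prop :=
  ∀ k, a ⬝ᵥ (u (![1, 0] + k) - u k) = 0 ∧ b ⬝ᵥ (u (![0, 1] + k) - u k) = 0 ∧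
    (a - b) ⬝ᵥ (u (![1, 0] + k) - u (![0, 1] + k)) = 0

theorem exists_eq_smul_rot90_of_triangle {a b x y : Fin 2 → ℝ} (hab : b ⬝ᵥ rot90 a ≠ 0)
    (hx : a ⬝ᵥ x = 0) (hy : b ⬝ᵥ y = 0) (hxy : (a - b) ⬝ᵥ (x - y) = 0) :
    ∃ ω : ℝ, x = ω • rot90 a ∧ y = ω • rot90 b := by
  have hay : a ⬝ᵥ y = -(b ⬝ᵥ x) := by
    simp only [sub_dotProduct, dotProduct_sub, hx, hy, dotProduct_comm b x] at hxy ⊢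
    linarith
  refine ⟨(b ⬝ᵥ x) / (b ⬝ᵥ rot90 a), ?_, ?_⟩ <;> apply smul_right_injective _ hab <;>
    dsimp only <;> rw [smul_smul, mul_div_cancel₀ _ hab]
  · rw [dotProduct_rot90_smul_eq_sub a b x, hx, zero_smul, sub_zero]
  · rw [dotProduct_rot90_smul_eq_sub a b y, hy, hay, zero_smul, zero_sub, neg_smul, neg_neg]

theorem eq_zero_of_smul_rot90_eq {a b : Fin 2 → ℝ} (hab : b ⬝ᵥ rot90 a ≠ 0) {s t : ℝ}
    (h : s • rot90 b = t • rot90 a) : s = 0 ∧ t = 0 := by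
  have ha := congrArg (a ⬝ᵥ ·) h
  have hb := congrArg (b ⬝ᵥ ·) h
  simp only [dotProduct_smul, dotProduct_rot90_self, dotProduct_rot90_comm a b, smul_eq_mul] at ha hb
  exact ⟨(mul_eq_zero.mp (by linarith)).resolve_right hab,
    (mul_eq_zero.mp (by linarith)).resolve_right hab⟩

namespace IsTriangularLatticeFlex

variable {a b : Fin 2 → ℝ} {u : (Fin 2 → ℤ) → Fin 2 → ℝ}

theorem exists_local_rotation (hu : IsTriangularLatticeFlex a b u) (hab : b ⬝ᵥ rot90 a ≠ 0) :
    ∃ ω : (Fin 2 → ℤ) → ℝ, ∀ k, u (![1, 0] + k) - u k = ω k • rot90 a ∧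
      u (![0, 1] + k) - u k = ω k • rot90 b := by
  choose ω hω using fun k => exists_eq_smul_rot90_of_triangle hab (hu k).1 (hu k).2.1
    (by rw [sub_sub_sub_cancel_right]; exact (hu k).2.2)
  exact ⟨ω, hω⟩

theorem exists_rotation (hu : IsTriangularLatticeFlex a b u) (hab : b ⬝ᵥ rot90 a ≠ 0) :
    ∃ ω : ℝ, ∀ k, u (![1, 0] + k) = u k + ω • rot90 a ∧ u (![0, 1] + k) = u k + ω • rot90 b := by
  obtain ⟨ω, hω⟩ := hu.exists_local_rotation hab
  -- the two routes from `k` to `k + (1,1)` around a parallelogram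
  have parallelogram : ∀ k, (ω (![1, 0] + k) - ω k) • rot90 b =
      (ω (![0, 1] + k) - ω k) • rot90 a := by
    intro k
    have h₁ := (hω (![1, 0] + k)).2
    have h₂ := (hω (![0, 1] + k)).1
    rw [add_left_comm] at h₁
    rw [sub_smul, sub_smul, ← h₁, ← h₂, ← (hω k).1, ← (hω k).2]
    abel
  have hconst := eq_apply_zero_of_translation_invariant (f := ω)
    (fun k => sub_eq_zero.mp (eq_zero_of_smul_rot90_eq hab (parallelogram k)).1)
    (fun k => sub_eq_zero.mp (eq_zero_of_smul_rot90_eq hab (parallelogram k)).2)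
  refine ⟨ω 0, fun k => ?_⟩
  rw [← hconst k, ← (hω k).1, ← (hω k).2, add_sub_cancel, add_sub_cancel]
  exact ⟨rfl, rfl⟩

theorem exists_eq_add_smul_rot90 (hu : IsTriangularLatticeFlex a b u) (hab : b ⬝ᵥ rot90 a ≠ 0) :
    ∃ ω : ℝ, ∀ k, u k = u 0 + ω • rot90 ((k 0 : ℝ) • a + (k 1 : ℝ) • b) := by
  obtain ⟨ω, hω⟩ := hu.exists_rotation hab
  refine ⟨ω, fun k => ?_⟩
  have := eq_apply_zero_of_translation_invariant
    (f := fun k => u k - ω • rot90 ((k 0 : ℝ) • a + (k 1 : ℝ) • b))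
    (fun k => by rw [(hω k).1]; simp [add_smul, smul_add, map_add]; abel)
    (fun k => by rw [(hω k).2]; simp [add_smul, smul_add, map_add]; abel) k
  simp only [Pi.zero_apply, Int.cast_zero, zero_smul, add_zero, map_zero, smul_zero,
    sub_zero] at this
  exact sub_eq_iff_eq_add.mp this

end IsTriangularLatticeFlex

namespace CrystalFramework

theorem joint_eq_add (C : CrystalFramework 2) (v : C.V) (k : Fin 2 → ℤ) :
    C.joint v k = C.p v + ((k 0 : ℝ) • C.a 0 + (k 1 : ℝ) • C.a 1) := by
  ext i; simp [joint, Fin.sum_univ_two]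

theorem IsRealFlex.dotProduct_eq_zero {d : ℕ} {C : CrystalFramework d}
    {u : C.V × (Fin d → ℤ) → Fin d → ℝ} (hu : C.IsRealFlex u) {e : C.E} {v w : C.V}
    {l m : Fin d → ℤ} (hfst : C.fst e = (v, l)) (hsnd : C.snd e = (w, m)) (k : Fin d → ℤ) :
    (C.joint v l - C.joint w m) ⬝ᵥ (u (v, l + k) - u (w, m + k)) = 0 := by
  have := hu e k
  simp only [edgeVec, hfst, hsnd] at this
  exact this

theorem IsRealFlex.isTriangularLatticeFlex {C : CrystalFramework 2}
    {u : C.V × (Fin 2 → ℤ) → Fin 2 → ℝ} (hu : C.IsRealFlex u) {v₀ : C.V} {e₀ e₁ e₂ : C.E}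
    (he₀ : C.fst e₀ = (v₀, 0) ∧ C.snd e₀ = (v₀, ![1, 0]))
    (he₁ : C.fst e₁ = (v₀, ![1, 0]) ∧ C.snd e₁ = (v₀, ![0, 1]))
    (he₂ : C.fst e₂ = (v₀, 0) ∧ C.snd e₂ = (v₀, ![0, 1])) :
    IsTriangularLatticeFlex (C.a 0) (C.a 1) (fun k => u (v₀, k)) := fun k => by
  have h₀ := hu.dotProduct_eq_zero he₀.1 he₀.2 k
  have h₁ := hu.dotProduct_eq_zero he₁.1 he₁.2 k
  have h₂ := hu.dotProduct_eq_zero he₂.1 he₂.2 k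
  have hp₀ : C.joint v₀ 0 - C.joint v₀ ![1, 0] = -C.a 0 := by simp [C.joint_eq_add]
  have hp₁ : C.joint v₀ ![1, 0] - C.joint v₀ ![0, 1] = C.a 0 - C.a 1 := by simp [C.joint_eq_add]
  have hp₂ : C.joint v₀ 0 - C.joint v₀ ![0, 1] = -C.a 1 := by simp [C.joint_eq_add]
  rw [hp₀, zero_add, ← neg_sub, neg_dotProduct_neg] at h₀
  rw [hp₂, zero_add, ← neg_sub, neg_dotProduct_neg] at h₂
  rw [hp₁] at h₁
  exact ⟨h₀, h₂, h₁⟩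

theorem isRealTrivial_of_eq_add_smul_rot90 (C : CrystalFramework 2)
    {u : C.V × (Fin 2 → ℤ) → Fin 2 → ℝ} (t : Fin 2 → ℝ) (ω : ℝ)
    (hu : ∀ v k, u (v, k) = t + ω • rot90 (C.joint v k)) : C.IsRealTrivial u := by
  intro v w k k'
  change (C.joint v k - C.joint w k') ⬝ᵥ (u (v, k) - u (w, k')) = 0
  rw [hu, hu, add_sub_add_left_eq_sub, ← smul_sub, ← map_sub, dotProduct_smul,
    dotProduct_rot90_self, smul_zero]

end CrystalFramework

theorem triangulated_infinitesimally_rigid_general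
    (C : CrystalFramework 2) (v₀ : C.V) (hv : ∀ v : C.V, v = v₀)
    (eE : C.E ≃ Fin 3)
    (he0 : C.fst (eE.symm 0) = (v₀, 0) ∧ C.snd (eE.symm 0) = (v₀, ![1, 0]))
    (he1 : C.fst (eE.symm 1) = (v₀, ![1, 0]) ∧ C.snd (eE.symm 1) = (v₀, ![0, 1]))
    (he2 : C.fst (eE.symm 2) = (v₀, 0) ∧ C.snd (eE.symm 2) = (v₀, ![0, 1])) :
    ∀ u : C.V × (Fin 2 → ℤ) → Fin 2 → ℝ,
      C.IsRealFlex u → C.IsRealTrivial u := by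
  intro u hu
  obtain ⟨ω, hω⟩ := (hu.isTriangularLatticeFlex he0 he1 he2).exists_eq_add_smul_rot90
    (dotProduct_rot90_ne_zero C.indep)
  refine C.isRealTrivial_of_eq_add_smul_rot90 (u (v₀, 0) - ω • rot90 (C.p v₀)) ω fun v k => ?_
  simp only [hv v, hω k, C.joint_eq_add, map_add, smul_add]
  abel

/-- The triangulated crystal framework (single motif vertex at the
origin, lattice vectors `(1,0)` and `(1/2, √3/2)`, each joint joined to its six
nearest neighbours) is infinitesimally rigid: every real infinitesimal flex is
trivial. -/
theorem triangulated_infinitesimally_rigid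
    (C : CrystalFramework 2) (v₀ : C.V) (hv : ∀ v : C.V, v = v₀)
    (hp : C.p v₀ = 0)
    (ha0 : C.a 0 = ![1, 0]) (ha1 : C.a 1 = ![1 / 2, Real.sqrt 3 / 2])
    (eE : C.E ≃ Fin 3)
    (he0 : C.fst (eE.symm 0) = (v₀, 0) ∧ C.snd (eE.symm 0) = (v₀, ![1, 0]))
    (he1 : C.fst (eE.symm 1) = (v₀, ![1, 0]) ∧ C.snd (eE.symm 1) = (v₀, ![0, 1]))
    (he2 : C.fst (eE.symm 2) = (v₀, 0) ∧ C.snd (eE.symm 2) = (v₀, ![0, 1])) :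
    ∀ u : C.V × (Fin 2 → ℤ) → Fin 2 → ℝ,
      C.IsRealFlex u → C.IsRealTrivial u :=
  triangulated_infinitesimally_rigid_general C v₀ hv eE he0 he1 he2
end
end
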